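/- Let K ⊆ ℝ^d be a compact set with |K| > 0 and let {B_j}_{j≥0} be a hierarchical partition of K. Then the system X({B_j}_{j≥0}) = {φ_0} ∪ ∪_{j≥0} ∪_{B∈B_j} Ψ_{j,B} is a tight frame (with frame constant 1) for L²(K): for every f ∈ L²(K), ‖f‖² = |⟨f, φ_0⟩|² + Σ_{j≥0} Σ_{B∈B_j} Σ_{1≤ℓ_1<ℓ_2≤c_B} |⟨f, ψ_{j,B}^{(ℓ_1,ℓ_2)}⟩|². -/

import Mathlib

open MeasureTheory Filter

/-- A hierarchical partition of a set `K`: a sequence of finite collections of measurable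
subsets of `K`, starting from `{K}`, each covering `K`, consisting of sets of positive
measure with pairwise null intersections, where every set of level `j` is the (enumerated)
union of its `c_B ≥ 1` children at level `j+1`, and with diameters tending to `0`. -/
structure HierarchicalPartition (X : Type*) [MeasureSpace X] [PseudoEMetricSpace X]
    (K : Set X) where
  part : ℕ → Finset (Set X)
  root : part 0 = {K}
  cover : ∀ j : ℕ, ⋃ B ∈ part j, B = K
  measurableSet : ∀ j : ℕ, ∀ B ∈ part j, MeasurableSet B
  pos : ∀ j : ℕ, ∀ B ∈ part j, 0 < volume B
  null_inter : ∀ j : ℕ, ∀ B ∈ part j, ∀ B' ∈ part j, B ≠ B' → volume (B ∩ B') = 0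
  numChild : ℕ → Set X → ℕ
  child : ℕ → Set X → ℕ → Set X
  one_le_numChild : ∀ j : ℕ, ∀ B ∈ part j, 1 ≤ numChild j B
  child_mem : ∀ j : ℕ, ∀ B ∈ part j, ∀ ℓ < numChild j B, child j B ℓ ∈ part (j + 1)
  child_ne : ∀ j : ℕ, ∀ B ∈ part j, ∀ ℓ₁ < numChild j B, ∀ ℓ₂ < numChild j B,
    ℓ₁ ≠ ℓ₂ → child j B ℓ₁ ≠ child j B ℓ₂
  child_union : ∀ j : ℕ, ∀ B ∈ part j, B = ⋃ ℓ ∈ Finset.range (numChild j B), child j B ℓ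
  density : Tendsto (fun j : ℕ => (part j).sup fun B => EMetric.diam B) atTop (nhds 0)

/-- `γ_C = χ_C / √|C|`. -/
noncomputable def gammaFn {X : Type*} [MeasureSpace X] (C : Set X) : X → ℝ :=
  C.indicator fun _ => (Real.sqrt (volume C).toReal)⁻¹

/-- `ψ^{(C,C')} = √(|C'|/|B|) γ_C − √(|C|/|B|) γ_{C'}` for sub-blocks `C, C'` of `B`. -/
noncomputable def psiFn {X : Type*} [MeasureSpace X] (B C C' : Set X) : X → ℝ :=
  fun x =>
    Real.sqrt ((volume C').toReal / (volume B).toReal) * gammaFn C x -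
      Real.sqrt ((volume C).toReal / (volume B).toReal) * gammaFn C' x

/-!
Write `E_N(f) = ∑_{B ∈ B_N} (∫_B f)² / |B|` for the squared norm of the average `A_N f` of `f`
over the blocks of level `N`, i.e. of its orthogonal projection onto the functions that are
constant on those blocks. For one block `B` with children `B_ℓ`, Lagrange's identity applied to
`s_ℓ = √|B_ℓ|` and `t_ℓ = (∫_{B_ℓ} f) / √|B_ℓ|` shows that the squared coefficients of `f`
against `Ψ_{j,B}` add up to `∑_ℓ (∫_{B_ℓ} f)² / |B_ℓ| - (∫_B f)² / |B|`. Summed over `B ∈ B_j`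
this is `E_{j+1}(f) - E_j(f)`, so the series telescopes, and `E_0(f) = ⟨f, φ₀⟩²`.

It remains to see that `E_N(f) → ‖f‖²`, i.e. that `‖f - A_N f‖² = ‖f‖² - E_N(f)` tends to `0`.
For uniformly continuous `f` this follows from `diam B → 0`; in general, approximate `f` in
`L²(K)` by a uniformly continuous function and use that `f ↦ f - A_N f` is a contraction.
-/

open Finset
open scoped ENNReal Topology

theorem Finset.sum_range_sum_range_mul_sub_mul_sq {R : Type*} [CommRing R] (s t : ℕ → R)
    (n : ℕ) :
    ∑ j ∈ range n, ∑ i ∈ range j, (s j * t i - s i * t j) ^ 2 =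
      (∑ i ∈ range n, s i ^ 2) * (∑ i ∈ range n, t i ^ 2) - (∑ i ∈ range n, s i * t i) ^ 2 := by
  induction n with
  | zero => simp
  | succ n ih =>
    have expand : ∀ i, (s n * t i - s i * t n) ^ 2 =
        s n ^ 2 * t i ^ 2 + t n ^ 2 * s i ^ 2 - 2 * (s n * t n) * (s i * t i) := fun i => by ring
    simp only [sum_range_succ, ih, expand, sum_sub_distrib, sum_add_distrib, ← mul_sum]
    ring

section Integral

variable {α : Type*} [MeasurableSpace α] {μ : Measure α}

theorem integral_biUnion_finset_ae {ι : Type*} (s : Finset ι) {t : ι → Set α} {f : α → ℝ}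
    (hm : ∀ i ∈ s, NullMeasurableSet (t i) μ)
    (hd : (s : Set ι).Pairwise fun i j => AEDisjoint μ (t i) (t j))
    (hf : ∀ i ∈ s, IntegrableOn f (t i) μ) :
    ∫ x in ⋃ i ∈ s, t i, f x ∂μ = ∑ i ∈ s, ∫ x in t i, f x ∂μ := by
  have hf' : IntegrableOn f (⋃ i ∈ s, t i) μ := integrableOn_finset_iUnion.2 hf
  rw [← set_biUnion_coe, Set.biUnion_eq_iUnion] at hf' ⊢
  rw [integral_iUnion_ae (ι := (s : Set ι)) (fun i => hm i i.2)
    (fun i j hij => hd i.2 j.2 (Subtype.coe_ne_coe.2 hij)) hf',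
    Finset.tsum_subtype' s fun i => ∫ x in t i, f x ∂μ]

theorem integral_mul_indicator_const {f : α → ℝ} {s : Set α} (hs : MeasurableSet s) (c : ℝ) :
    ∫ x, f x * s.indicator (fun _ => c) x ∂μ = (∫ x in s, f x ∂μ) * c := by
  simp_rw [← Set.indicator_mul_right, integral_indicator hs, integral_mul_const]

theorem abs_sub_setIntegral_div_le {s : Set α} (hμs : μ s ≠ ∞) (hμs₀ : μ s ≠ 0) {g : α → ℝ}
    (hg : IntegrableOn g s μ) {a c : ℝ} (h : ∀ y ∈ s, |a - g y| ≤ c) :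
    |a - (∫ y in s, g y ∂μ) / (μ s).toReal| ≤ c := by
  have hpos : 0 < (μ s).toReal := ENNReal.toReal_pos hμs₀ hμs
  have hfin : IsFiniteMeasure (μ.restrict s) := isFiniteMeasure_restrict.2 hμs
  have hmean : a - (∫ y in s, g y ∂μ) / (μ s).toReal =
      (∫ y in s, (a - g y) ∂μ) / (μ s).toReal := by
    rw [integral_sub (integrable_const a) hg, setIntegral_const, smul_eq_mul, measureReal_def]
    field_simp
  have hbound : ‖∫ y in s, (a - g y) ∂μ‖ ≤ c * (μ s).toReal := by
    simpa [measureReal_def] using norm_setIntegral_le_of_norm_le_const hμs.lt_top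
      (fun y hy => (Real.norm_eq_abs _).trans_le (h y hy))
  rw [hmean, abs_div, abs_of_pos hpos, div_le_iff₀ hpos]
  exact hbound

theorem integral_add_sq_le {u v : α → ℝ} (hu : MemLp u 2 μ) (hv : MemLp v 2 μ) :
    ∫ x, (u x + v x) ^ 2 ∂μ ≤ 2 * ∫ x, u x ^ 2 ∂μ + 2 * ∫ x, v x ^ 2 ∂μ := by
  rw [← integral_const_mul, ← integral_const_mul,
    ← integral_add (hu.integrable_sq.const_mul 2) (hv.integrable_sq.const_mul 2)]
  exact integral_mono (hu.add hv).integrable_sq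
    ((hu.integrable_sq.const_mul 2).add (hv.integrable_sq.const_mul 2))
    fun x => by nlinarith [sq_nonneg (u x - v x)]

theorem MeasureTheory.MemLp.exists_uniformContinuous_setIntegral_sub_sq_le
    [PseudoEMetricSpace α] [BorelSpace α] [WeaklyLocallyCompactSpace α] [μ.Regular] {K : Set α}
    (hK : MeasurableSet K) {f : α → ℝ} (hf : MemLp f 2 (μ.restrict K)) {ε : ℝ} (hε : 0 < ε) :
    ∃ g : α → ℝ, UniformContinuous g ∧ MemLp g 2 (μ.restrict K) ∧
      ∫ x in K, (f x - g x) ^ 2 ∂μ ≤ ε := by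
  have hF : MemLp (K.indicator f) (ENNReal.ofReal 2) μ := by
    rw [ENNReal.ofReal_ofNat]
    exact (memLp_indicator_iff_restrict hK).2 hf
  obtain ⟨g, hg_supp, hFg, hg_cont, hg⟩ := hF.exists_hasCompactSupport_integral_rpow_sub_le
    two_pos hε
  rw [ENNReal.ofReal_ofNat] at hF hg
  simp only [Real.rpow_two, Real.norm_eq_abs, sq_abs] at hFg
  refine ⟨g, hg_cont.uniformContinuous_of_tendsto_cocompact hg_supp.is_zero_at_infty,
    hg.restrict K, ?_⟩
  calc ∫ x in K, (f x - g x) ^ 2 ∂μ = ∫ x in K, (K.indicator f x - g x) ^ 2 ∂μ :=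
        setIntegral_congr_fun hK fun x hx => by rw [Set.indicator_of_mem hx]
    _ ≤ ∫ x, (K.indicator f x - g x) ^ 2 ∂μ :=
        setIntegral_le_integral (hF.sub hg).integrable_sq
          (Eventually.of_forall fun _ => sq_nonneg _)
    _ ≤ ε := hFg

end Integral

section HaarSystem

variable {X : Type*} [MeasureSpace X] {K C C' : Set X} {f : X → ℝ}

theorem integral_mul_gammaFn (hC : MeasurableSet C) (hCK : C ⊆ K) :
    ∫ x in K, f x * gammaFn C x = (∫ x in C, f x) / Real.sqrt (volume C).toReal := by
  rw [gammaFn, integral_mul_indicator_const hC, Measure.restrict_restrict_of_subset hCK,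
    div_eq_mul_inv]

theorem integrable_mul_gammaFn (hf : IntegrableOn f K) (hC : MeasurableSet C) :
    Integrable (fun x => f x * gammaFn C x) (volume.restrict K) := by
  simp_rw [gammaFn, ← Set.indicator_mul_right]
  exact (hf.mul_const _).indicator hC

theorem integral_mul_psiFn (hf : IntegrableOn f K) (hC : MeasurableSet C)
    (hC' : MeasurableSet C') (hCK : C ⊆ K) (hC'K : C' ⊆ K) (B : Set X) :
    ∫ x in K, f x * psiFn B C C' x =
      (Real.sqrt (volume C').toReal * ((∫ x in C, f x) / Real.sqrt (volume C).toReal) -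
        Real.sqrt (volume C).toReal * ((∫ x in C', f x) / Real.sqrt (volume C').toReal)) /
        Real.sqrt (volume B).toReal := by
  simp_rw [psiFn, mul_sub, mul_left_comm (f _)]
  rw [integral_sub ((integrable_mul_gammaFn hf hC).const_mul _)
      ((integrable_mul_gammaFn hf hC').const_mul _),
    integral_const_mul, integral_const_mul, integral_mul_gammaFn hC hCK,
    integral_mul_gammaFn hC' hC'K, Real.sqrt_div' _ ENNReal.toReal_nonneg,
    Real.sqrt_div' _ ENNReal.toReal_nonneg]
  ring

end HaarSystem

namespace HierarchicalPartition

variable {X : Type*} [MeasureSpace X] [PseudoEMetricSpace X] {K : Set X}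
  (P : HierarchicalPartition X K) {j N : ℕ} {B : Set X} {f g : X → ℝ}

theorem measurableSet_self (P : HierarchicalPartition X K) : MeasurableSet K :=
  P.measurableSet 0 K (by simp [P.root])

theorem subset_of_mem (hB : B ∈ P.part j) : B ⊆ K :=
  P.cover j ▸ subset_set_biUnion_of_mem (f := id) hB

theorem child_mem_of_mem_range (hB : B ∈ P.part j) {ℓ : ℕ}
    (hℓ : ℓ ∈ range (P.numChild j B)) : P.child j B ℓ ∈ P.part (j + 1) :=
  P.child_mem j B hB ℓ (mem_range.1 hℓ)

theorem child_subset (hB : B ∈ P.part j) {ℓ : ℕ} (hℓ : ℓ ∈ range (P.numChild j B)) :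
    P.child j B ℓ ⊆ B :=
  (subset_set_biUnion_of_mem (f := P.child j B) hℓ).trans (P.child_union j B hB).symm.subset

theorem measure_ne_top (hK : volume K ≠ ∞) (hB : B ∈ P.part j) : volume B ≠ ∞ :=
  measure_ne_top_of_subset (P.subset_of_mem hB) hK

theorem toReal_measure_pos (hK : volume K ≠ ∞) (hB : B ∈ P.part j) :
    0 < (volume B).toReal :=
  ENNReal.toReal_pos (P.pos j B hB).ne' (P.measure_ne_top hK hB)

theorem aedisjoint_child (hB : B ∈ P.part j) :
    (range (P.numChild j B) : Set ℕ).Pairwise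
      fun ℓ ℓ' => AEDisjoint volume (P.child j B ℓ) (P.child j B ℓ') :=
  fun ℓ hℓ ℓ' hℓ' hne => P.null_inter _ _ (P.child_mem_of_mem_range hB hℓ) _
    (P.child_mem_of_mem_range hB hℓ')
    (P.child_ne j B hB ℓ (mem_range.1 hℓ) ℓ' (mem_range.1 hℓ') hne)

theorem toReal_measure_eq_sum_child (hK : volume K ≠ ∞) (hB : B ∈ P.part j) :
    (volume B).toReal = ∑ ℓ ∈ range (P.numChild j B), (volume (P.child j B ℓ)).toReal := by
  simp_rw [← measureReal_def]
  conv_lhs => rw [P.child_union j B hB]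
  exact measureReal_biUnion_finset₀ (P.aedisjoint_child hB)
    (fun ℓ hℓ => (P.measurableSet _ _ (P.child_mem_of_mem_range hB hℓ)).nullMeasurableSet)
    (fun ℓ hℓ => P.measure_ne_top hK (P.child_mem_of_mem_range hB hℓ))

theorem setIntegral_eq_sum_child (hf : IntegrableOn f K) (hB : B ∈ P.part j) :
    ∫ x in B, f x = ∑ ℓ ∈ range (P.numChild j B), ∫ x in P.child j B ℓ, f x := by
  conv_lhs => rw [P.child_union j B hB]
  exact integral_biUnion_finset_ae _
    (fun ℓ hℓ => (P.measurableSet _ _ (P.child_mem_of_mem_range hB hℓ)).nullMeasurableSet)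
    (P.aedisjoint_child hB)
    (fun ℓ hℓ => hf.mono_set ((P.child_subset hB hℓ).trans (P.subset_of_mem hB)))

theorem child_injective {B' : Set X} (hB : B ∈ P.part j) (hB' : B' ∈ P.part j) {ℓ ℓ' : ℕ}
    (hℓ : ℓ ∈ range (P.numChild j B)) (hℓ' : ℓ' ∈ range (P.numChild j B'))
    (h : P.child j B ℓ = P.child j B' ℓ') : B = B' ∧ ℓ = ℓ' := by
  obtain rfl : B = B' := by
    by_contra hne
    have hsub : P.child j B ℓ ⊆ B ∩ B' :=
      Set.subset_inter (P.child_subset hB hℓ) (h ▸ P.child_subset hB' hℓ')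
    exact (P.pos _ _ (P.child_mem_of_mem_range hB hℓ)).ne'
      (measure_mono_null hsub (P.null_inter j B hB B' hB' hne))
  refine ⟨rfl, ?_⟩
  by_contra hne
  exact P.child_ne j B hB ℓ (mem_range.1 hℓ) ℓ' (mem_range.1 hℓ') hne h

theorem exists_child_eq {B' : Set X} (hB' : B' ∈ P.part (j + 1)) :
    ∃ B ∈ P.part j, ∃ ℓ ∈ range (P.numChild j B), P.child j B ℓ = B' := by
  by_contra! hne
  have hsub : B' ⊆ ⋃ B ∈ P.part j, ⋃ ℓ ∈ range (P.numChild j B), B' ∩ P.child j B ℓ := by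
    intro x hx
    have hxK : x ∈ ⋃ B ∈ P.part j, B := by rw [P.cover j]; exact P.subset_of_mem hB' hx
    obtain ⟨B, hB, hxB⟩ := Set.mem_iUnion₂.1 hxK
    rw [P.child_union j B hB] at hxB
    obtain ⟨ℓ, hℓ, hxC⟩ := Set.mem_iUnion₂.1 hxB
    exact Set.mem_iUnion₂.2 ⟨B, hB, Set.mem_iUnion₂.2 ⟨ℓ, hℓ, hx, hxC⟩⟩
  refine (P.pos _ _ hB').ne' (measure_mono_null hsub ?_)
  refine (measure_biUnion_null_iff (P.part j).countable_toSet).2 fun B hB =>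
    (measure_biUnion_null_iff (range _).countable_toSet).2 fun ℓ hℓ => ?_
  exact P.null_inter _ _ hB' _ (P.child_mem_of_mem_range hB hℓ) (hne B hB ℓ hℓ).symm

theorem sum_sum_child_eq {M : Type*} [AddCommMonoid M] (g : Set X → M) (j : ℕ) :
    ∑ B ∈ P.part j, ∑ ℓ ∈ range (P.numChild j B), g (P.child j B ℓ) =
      ∑ B' ∈ P.part (j + 1), g B' := by
  rw [sum_sigma']
  refine sum_bij (fun p _ => P.child j p.1 p.2) ?_ ?_ ?_ fun _ _ => rfl
  · rintro ⟨B, ℓ⟩ hp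
    rw [mem_sigma] at hp
    exact P.child_mem_of_mem_range hp.1 hp.2
  · rintro ⟨B, ℓ⟩ hp ⟨B', ℓ'⟩ hp' h
    rw [mem_sigma] at hp hp'
    obtain ⟨rfl, rfl⟩ := P.child_injective hp.1 hp'.1 hp.2 hp'.2 h
    rfl
  · intro B' hB'
    obtain ⟨B, hB, ℓ, hℓ, hEq⟩ := P.exists_child_eq hB'
    exact ⟨⟨B, ℓ⟩, mem_sigma.2 ⟨hB, hℓ⟩, hEq⟩

theorem sum_integral_mul_psiFn_sq (hK : volume K ≠ ∞) (hf : IntegrableOn f K)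
    (hB : B ∈ P.part j) :
    ∑ ℓ₂ ∈ range (P.numChild j B), ∑ ℓ₁ ∈ range ℓ₂,
        (∫ x in K, f x * psiFn B (P.child j B ℓ₁) (P.child j B ℓ₂) x) ^ 2 =
      ∑ ℓ ∈ range (P.numChild j B),
          (∫ x in P.child j B ℓ, f x) ^ 2 / (volume (P.child j B ℓ)).toReal -
        (∫ x in B, f x) ^ 2 / (volume B).toReal := by
  set C := P.child j B
  set s : ℕ → ℝ := fun ℓ => Real.sqrt (volume (C ℓ)).toReal
  set t : ℕ → ℝ := fun ℓ => (∫ x in C ℓ, f x) / Real.sqrt (volume (C ℓ)).toReal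
  have hC : ∀ ℓ ∈ range (P.numChild j B), MeasurableSet (C ℓ) ∧ C ℓ ⊆ K ∧
      0 < (volume (C ℓ)).toReal := fun ℓ hℓ =>
    ⟨P.measurableSet _ _ (P.child_mem_of_mem_range hB hℓ),
      (P.child_subset hB hℓ).trans (P.subset_of_mem hB),
      P.toReal_measure_pos hK (P.child_mem_of_mem_range hB hℓ)⟩
  have hcoeff : ∀ ℓ₂ ∈ range (P.numChild j B), ∀ ℓ₁ ∈ range ℓ₂,
      ∫ x in K, f x * psiFn B (C ℓ₁) (C ℓ₂) x =
        (s ℓ₂ * t ℓ₁ - s ℓ₁ * t ℓ₂) / Real.sqrt (volume B).toReal := fun ℓ₂ h₂ ℓ₁ h₁ => by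
    have h₁' := range_subset_range.2 (mem_range.1 h₂).le h₁
    exact integral_mul_psiFn hf (hC ℓ₁ h₁').1 (hC ℓ₂ h₂).1 (hC ℓ₁ h₁').2.1 (hC ℓ₂ h₂).2.1 B
  have hs : ∑ ℓ ∈ range (P.numChild j B), s ℓ ^ 2 = (volume B).toReal := by
    simp only [s, Real.sq_sqrt ENNReal.toReal_nonneg, P.toReal_measure_eq_sum_child hK hB, C]
  have ht : ∀ ℓ, t ℓ ^ 2 = (∫ x in C ℓ, f x) ^ 2 / (volume (C ℓ)).toReal := fun ℓ => by
    rw [div_pow, Real.sq_sqrt ENNReal.toReal_nonneg]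
  have hst : ∑ ℓ ∈ range (P.numChild j B), s ℓ * t ℓ = ∫ x in B, f x := by
    rw [P.setIntegral_eq_sum_child hf hB]
    exact sum_congr rfl fun ℓ hℓ =>
      mul_div_cancel₀ _ (Real.sqrt_pos.2 (hC ℓ hℓ).2.2).ne'
  have hB₀ : (volume B).toReal ≠ 0 := (P.toReal_measure_pos hK hB).ne'
  calc ∑ ℓ₂ ∈ range (P.numChild j B), ∑ ℓ₁ ∈ range ℓ₂,
          (∫ x in K, f x * psiFn B (C ℓ₁) (C ℓ₂) x) ^ 2
      = (∑ ℓ₂ ∈ range (P.numChild j B), ∑ ℓ₁ ∈ range ℓ₂, (s ℓ₂ * t ℓ₁ - s ℓ₁ * t ℓ₂) ^ 2) /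
          (volume B).toReal := by
        simp only [sum_div]
        refine sum_congr rfl fun ℓ₂ h₂ => sum_congr rfl fun ℓ₁ h₁ => ?_
        rw [hcoeff ℓ₂ h₂ ℓ₁ h₁, div_pow, Real.sq_sqrt ENNReal.toReal_nonneg]
    _ = _ := by
        rw [sum_range_sum_range_mul_sub_mul_sq, hs, hst]
        simp only [ht]
        field_simp

noncomputable def levelEnergy (f : X → ℝ) (N : ℕ) : ℝ :=
  ∑ B ∈ P.part N, (∫ x in B, f x) ^ 2 / (volume B).toReal

theorem levelEnergy_nonneg (f : X → ℝ) (N : ℕ) : 0 ≤ P.levelEnergy f N :=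
  sum_nonneg fun _ _ => div_nonneg (sq_nonneg _) ENNReal.toReal_nonneg

theorem levelEnergy_zero (f : X → ℝ) :
    P.levelEnergy f 0 = (∫ x in K, f x * gammaFn K x) ^ 2 := by
  rw [levelEnergy, P.root, sum_singleton, integral_mul_gammaFn P.measurableSet_self subset_rfl,
    div_pow, Real.sq_sqrt ENNReal.toReal_nonneg]

theorem sum_part_sum_integral_mul_psiFn_sq (hK : volume K ≠ ∞) (hf : IntegrableOn f K)
    (j : ℕ) :
    ∑ B ∈ P.part j, ∑ ℓ₂ ∈ range (P.numChild j B), ∑ ℓ₁ ∈ range ℓ₂,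
        (∫ x in K, f x * psiFn B (P.child j B ℓ₁) (P.child j B ℓ₂) x) ^ 2 =
      P.levelEnergy f (j + 1) - P.levelEnergy f j := by
  rw [sum_congr rfl fun B hB => P.sum_integral_mul_psiFn_sq hK hf hB, sum_sub_distrib,
    P.sum_sum_child_eq fun C => (∫ x in C, f x) ^ 2 / (volume C).toReal]
  rfl

noncomputable def levelAverage (f : X → ℝ) (N : ℕ) (x : X) : ℝ :=
  ∑ B ∈ P.part N, B.indicator (fun _ => (∫ y in B, f y) / (volume B).toReal) x

theorem memLp_levelAverage (hK : volume K ≠ ∞) (f : X → ℝ) (N : ℕ) :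
    MemLp (P.levelAverage f N) 2 (volume.restrict K) := by
  have : IsFiniteMeasure (volume.restrict K) := isFiniteMeasure_restrict.2 hK
  exact memLp_finsetSum _ fun B hB =>
    memLp_indicator_const 2 (P.measurableSet N B hB) _ (Or.inr (MeasureTheory.measure_ne_top _ B))

theorem levelAverage_sub (hf : IntegrableOn f K) (hg : IntegrableOn g K) :
    P.levelAverage (f - g) N = P.levelAverage f N - P.levelAverage g N := by
  funext x
  simp only [levelAverage, Pi.sub_apply, ← sum_sub_distrib]
  refine sum_congr rfl fun B hB => ?_
  rw [integral_sub (hf.mono_set (P.subset_of_mem hB)) (hg.mono_set (P.subset_of_mem hB)),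
    sub_div]
  exact congrFun (Set.indicator_sub B _ _) x

theorem integral_mul_levelAverage (hg : IntegrableOn g K) (f : X → ℝ) (N : ℕ) :
    ∫ x in K, g x * P.levelAverage f N x =
      ∑ B ∈ P.part N, (∫ x in B, g x) * ((∫ x in B, f x) / (volume B).toReal) := by
  simp only [levelAverage, mul_sum]
  rw [integral_finsetSum _ fun B hB => by
    simp_rw [← Set.indicator_mul_right]
    exact (hg.mul_const _).indicator (P.measurableSet N B hB)]
  refine sum_congr rfl fun B hB => ?_
  rw [integral_mul_indicator_const (P.measurableSet N B hB),
    Measure.restrict_restrict_of_subset (P.subset_of_mem hB)]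

theorem ae_levelAverage_eq (f : X → ℝ) (N : ℕ) :
    ∀ᵐ x, ∀ B ∈ P.part N, x ∈ B → P.levelAverage f N x = (∫ y in B, f y) / (volume B).toReal := by
  have hunique : ∀ᵐ x, ∀ B ∈ P.part N, ∀ B' ∈ P.part N, B' ≠ B → x ∉ B' ∩ B := by
    refine (eventually_all_finset _).2 fun B hB => (eventually_all_finset _).2 fun B' hB' => ?_
    by_cases hne : B' = B
    · exact Eventually.of_forall fun _ h => absurd hne h
    · filter_upwards [measure_eq_zero_iff_ae_notMem.1 (P.null_inter N B' hB' B hB hne)]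
        with x hx _ using hx
  filter_upwards [hunique] with x hx B hB hxB
  rw [levelAverage, sum_eq_single_of_mem B hB fun B' hB' hne =>
    Set.indicator_of_notMem (fun hxB' => hx B hB B' hB' hne ⟨hxB', hxB⟩) _,
    Set.indicator_of_mem hxB]

theorem setIntegral_levelAverage (hK : volume K ≠ ∞) (f : X → ℝ)
    (hB : B ∈ P.part N) : ∫ x in B, P.levelAverage f N x = ∫ x in B, f x := by
  rw [setIntegral_congr_ae (P.measurableSet N B hB)
      ((P.ae_levelAverage_eq f N).mono fun x hx hxB => hx B hB hxB),
    setIntegral_const, smul_eq_mul, measureReal_def,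
    mul_div_cancel₀ _ (P.toReal_measure_pos hK hB).ne']

theorem integral_sub_levelAverage_sq (hK : volume K ≠ ∞) (hf : MemLp f 2 (volume.restrict K))
    (N : ℕ) :
    ∫ x in K, (f x - P.levelAverage f N x) ^ 2 = (∫ x in K, f x ^ 2) - P.levelEnergy f N := by
  have : IsFiniteMeasure (volume.restrict K) := isFiniteMeasure_restrict.2 hK
  have hA := P.memLp_levelAverage hK f N
  have hfA : ∫ x in K, f x * P.levelAverage f N x = P.levelEnergy f N := by
    rw [P.integral_mul_levelAverage (hf.integrable one_le_two)]
    exact sum_congr rfl fun B _ => by ring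
  have hAA : ∫ x in K, P.levelAverage f N x * P.levelAverage f N x = P.levelEnergy f N := by
    rw [P.integral_mul_levelAverage (hA.integrable one_le_two)]
    exact sum_congr rfl fun B hB => by rw [P.setIntegral_levelAverage hK f hB]; ring
  have hexpand : ∀ x, (f x - P.levelAverage f N x) ^ 2 = f x ^ 2 -
      2 * (f x * P.levelAverage f N x) + P.levelAverage f N x * P.levelAverage f N x :=
    fun x => by ring
  simp_rw [hexpand]
  rw [integral_add, integral_sub, integral_const_mul, hfA, hAA]
  · ring
  · exact hf.integrable_sq
  · exact (hf.integrable_mul hA).const_mul 2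
  · exact hf.integrable_sq.sub ((hf.integrable_mul hA).const_mul 2)
  · exact hA.integrable_mul hA

theorem integral_sub_levelAverage_sq_le (hK : volume K ≠ ∞)
    (hf : MemLp f 2 (volume.restrict K)) (N : ℕ) :
    ∫ x in K, (f x - P.levelAverage f N x) ^ 2 ≤ ∫ x in K, f x ^ 2 := by
  rw [P.integral_sub_levelAverage_sq hK hf]
  linarith [P.levelEnergy_nonneg f N]

theorem eventually_integral_sub_levelAverage_sq_le (hK : volume K ≠ ∞)
    (hu : UniformContinuous g) (hg : MemLp g 2 (volume.restrict K)) {c : ℝ} (hc : 0 < c) :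
    ∀ᶠ N in atTop, ∫ x in K, (g x - P.levelAverage g N x) ^ 2 ≤ c ^ 2 * (volume K).toReal := by
  have : IsFiniteMeasure (volume.restrict K) := isFiniteMeasure_restrict.2 hK
  obtain ⟨δ, hδ, hδc⟩ := EMetric.uniformContinuous_iff.1 hu _ (ENNReal.ofReal_pos.2 hc)
  filter_upwards [P.density.eventually_lt_const hδ] with N hN
  have hclose : ∀ᵐ x ∂volume.restrict K, |g x - P.levelAverage g N x| ≤ c := by
    filter_upwards [ae_restrict_mem P.measurableSet_self,
      ae_restrict_of_ae (P.ae_levelAverage_eq g N)] with x hxK hA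
    obtain ⟨B, hB, hxB⟩ := Set.mem_iUnion₂.1 ((P.cover N).symm ▸ hxK)
    rw [hA B hB hxB]
    refine abs_sub_setIntegral_div_le (P.measure_ne_top hK hB) (P.pos N B hB).ne'
      (IntegrableOn.mono_set (hg.integrable one_le_two) (P.subset_of_mem hB)) fun y hy => ?_
    have hxy : edist x y < δ :=
      (Metric.edist_le_ediam_of_mem hxB hy).trans_lt ((le_sup hB).trans_lt hN)
    exact (Real.dist_eq _ _ ▸ edist_lt_ofReal.1 (hδc hxy)).le
  calc ∫ x in K, (g x - P.levelAverage g N x) ^ 2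
      ≤ ∫ _ in K, c ^ 2 :=
        integral_mono_ae (hg.sub (P.memLp_levelAverage hK g N)).integrable_sq
          (integrable_const _) (hclose.mono fun x hx => sq_le_sq.2 (hx.trans (le_abs_self c)))
    _ = c ^ 2 * (volume K).toReal := by
        rw [setIntegral_const, smul_eq_mul, measureReal_def, mul_comm]

section Convergence

variable [BorelSpace X] [WeaklyLocallyCompactSpace X] [(volume : Measure X).Regular]

theorem tendsto_integral_sub_levelAverage_sq (hK : volume K ≠ ∞)
    (hf : MemLp f 2 (volume.restrict K)) :
    Tendsto (fun N => ∫ x in K, (f x - P.levelAverage f N x) ^ 2) atTop (𝓝 0) := by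
  have : IsFiniteMeasure (volume.restrict K) := isFiniteMeasure_restrict.2 hK
  refine tendsto_order.2 ⟨fun a ha => Eventually.of_forall fun N =>
    ha.trans_le (integral_nonneg fun _ => sq_nonneg _), fun ε hε => ?_⟩
  obtain ⟨g, hgu, hg, hfg⟩ :=
    hf.exists_uniformContinuous_setIntegral_sub_sq_le P.measurableSet_self (ε := ε / 4)
      (by positivity)
  set c := Real.sqrt (ε / (4 * ((volume K).toReal + 1)))
  have hKr : 0 ≤ (volume K).toReal := ENNReal.toReal_nonneg
  have hc : c ^ 2 * (volume K).toReal < ε / 4 := by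
    rw [Real.sq_sqrt (by positivity), div_mul_eq_mul_div, div_lt_iff₀ (by positivity)]
    nlinarith
  filter_upwards [P.eventually_integral_sub_levelAverage_sq_le hK hgu hg (c := c)
    (Real.sqrt_pos.2 (by positivity))] with N hN
  have hsplit : ∀ x, f x - P.levelAverage f N x =
      ((f - g) x - P.levelAverage (f - g) N x) + (g x - P.levelAverage g N x) := fun x => by
    rw [P.levelAverage_sub (hf.integrable one_le_two) (hg.integrable one_le_two)]
    simp only [Pi.sub_apply]
    ring
  calc ∫ x in K, (f x - P.levelAverage f N x) ^ 2
      ≤ 2 * (∫ x in K, ((f - g) x - P.levelAverage (f - g) N x) ^ 2) +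
          2 * ∫ x in K, (g x - P.levelAverage g N x) ^ 2 := by
        simp_rw [hsplit]
        exact integral_add_sq_le (u := fun x => (f - g) x - P.levelAverage (f - g) N x)
          ((hf.sub hg).sub (P.memLp_levelAverage hK _ N)) (hg.sub (P.memLp_levelAverage hK _ N))
    _ ≤ 2 * (∫ x in K, (f - g) x ^ 2) + 2 * (c ^ 2 * (volume K).toReal) := by
        linarith [P.integral_sub_levelAverage_sq_le hK (hf.sub hg) N]
    _ < ε := by
        simp only [Pi.sub_apply]
        linarith

theorem tendsto_levelEnergy (hK : volume K ≠ ∞) (hf : MemLp f 2 (volume.restrict K)) :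
    Tendsto (P.levelEnergy f) atTop (𝓝 (∫ x in K, f x ^ 2)) := by
  have h := (P.tendsto_integral_sub_levelAverage_sq hK hf).const_sub (∫ x in K, f x ^ 2)
  rw [sub_zero] at h
  refine h.congr fun N => ?_
  rw [P.integral_sub_levelAverage_sq hK hf, sub_sub_cancel]

theorem hasSum_sum_part_sum_integral_mul_psiFn_sq (hK : volume K ≠ ∞)
    (hf : MemLp f 2 (volume.restrict K)) :
    HasSum (fun j => ∑ B ∈ P.part j, ∑ ℓ₂ ∈ range (P.numChild j B), ∑ ℓ₁ ∈ range ℓ₂,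
        (∫ x in K, f x * psiFn B (P.child j B ℓ₁) (P.child j B ℓ₂) x) ^ 2)
      ((∫ x in K, f x ^ 2) - P.levelEnergy f 0) := by
  have : IsFiniteMeasure (volume.restrict K) := isFiniteMeasure_restrict.2 hK
  refine (hasSum_iff_tendsto_nat_of_nonneg (fun j => sum_nonneg fun _ _ =>
    sum_nonneg fun _ _ => sum_nonneg fun _ _ => sq_nonneg _) _).2 ?_
  simp_rw [P.sum_part_sum_integral_mul_psiFn_sq hK (hf.integrable one_le_two),
    sum_range_sub (P.levelEnergy f)]
  exact (P.tendsto_levelEnergy hK hf).sub_const _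

end Convergence

end HierarchicalPartition

theorem hierarchicalPartition_tight_frame_general
    {d : ℕ} (K : Set (Fin d → ℝ)) (hK : IsCompact K)
    (P : HierarchicalPartition (Fin d → ℝ) K)
    (f : (Fin d → ℝ) → ℝ) (hf : MemLp f 2 (volume.restrict K)) :
    ∫ x, f x ^ 2 ∂(volume.restrict K) =
      (∫ x, f x * gammaFn K x ∂(volume.restrict K)) ^ 2 +
        ∑' j : ℕ, ∑ B ∈ P.part j, ∑ ℓ₂ ∈ Finset.range (P.numChild j B), ∑ ℓ₁ ∈ Finset.range ℓ₂,
          (∫ x, f x * psiFn B (P.child j B ℓ₁) (P.child j B ℓ₂) x ∂(volume.restrict K)) ^ 2 := by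
  rw [(P.hasSum_sum_part_sum_integral_mul_psiFn_sq hK.measure_lt_top.ne hf).tsum_eq,
    P.levelEnergy_zero]
  ring

/-- for a compact `K ⊆ ℝ^d` of positive measure and a hierarchical partition
`{B_j}` of `K`, the system `X({B_j}) = {φ₀} ∪ ⋃_j ⋃_{B ∈ B_j} Ψ_{j,B}` is a tight frame with
frame constant 1 for `L²(K)`: for every `f ∈ L²(K)`,
`‖f‖² = |⟨f, φ₀⟩|² + ∑_j ∑_{B ∈ B_j} ∑_{ℓ₁ < ℓ₂ ≤ c_B} |⟨f, ψ_{j,B}^{(ℓ₁,ℓ₂)}⟩|²`. -/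
theorem hierarchicalPartition_tight_frame
    {d : ℕ} (K : Set (Fin d → ℝ)) (hK : IsCompact K) (hKpos : 0 < volume K)
    (P : HierarchicalPartition (Fin d → ℝ) K)
    (f : (Fin d → ℝ) → ℝ) (hf : MemLp f 2 (volume.restrict K)) :
    ∫ x, f x ^ 2 ∂(volume.restrict K) =
      (∫ x, f x * gammaFn K x ∂(volume.restrict K)) ^ 2 +
        ∑' j : ℕ, ∑ B ∈ P.part j, ∑ ℓ₂ ∈ Finset.range (P.numChild j B), ∑ ℓ₁ ∈ Finset.range ℓ₂,
          (∫ x, f x * psiFn B (P.child j B ℓ₁) (P.child j B ℓ₂) x ∂(volume.restrict K)) ^ 2 :=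
  hierarchicalPartition_tight_frame_general K hK P f hf
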